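/- arXiv:2507.01415 — 4 statements merged into one kernel-verified Lean document; each statement's English description precedes it below -/
import Mathlib

section
/- (Optimality condition yields nonsmooth decrease estimate) Let V be a real Hilbert space, W a closed subspace, F : V → ℝ differentiable convex, G : V → ℝ convex, τ > 0. Let ŵ ∈ W minimize w ↦ ⟪F'(v), w⟫ + (1/(2τ))‖w‖² + G(v + w) over W. Then G(v) - G(v + ŵ) ≥ ⟪F'(v), ŵ⟫ + (1/τ)‖ŵ‖². -/
open RealInnerProductSpace

theorem optimality_nonsmooth_estimate {V : Type*} [NormedAddCommGroup V]
    [InnerProductSpace ℝ V] [CompleteSpace V]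
    (W : Submodule ℝ V) (hW : IsClosed (W : Set V))
    (F : V → ℝ) (F' : V → V)
    (hFconv : ConvexOn ℝ Set.univ F)
    (hFdiff : ∀ v, HasGradientAt F (F' v) v)
    (G : V → ℝ) (hG : ConvexOn ℝ Set.univ G)
    (v : V) (τ : ℝ) (hτ : 0 < τ)
    (wh : V) (hmem : wh ∈ W)
    (hmin : ∀ w ∈ W, ⟪F' v, wh⟫ + 1 / (2 * τ) * ‖wh‖ ^ 2 + G (v + wh) ≤
      ⟪F' v, w⟫ + 1 / (2 * τ) * ‖w‖ ^ 2 + G (v + w)) :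
    ⟪F' v, wh⟫ + 1 / τ * ‖wh‖ ^ 2 ≤ G v - G (v + wh) := by
  have hn : (0:ℝ) ≤ ‖wh‖ ^ 2 := sq_nonneg _
  have hpos : (0:ℝ) < ‖wh‖ ^ 2 + 1 := by positivity
  refine le_of_forall_pos_le_add fun ε hε => ?_
  set δ : ℝ := min 1 (τ * ε / (‖wh‖ ^ 2 + 1)) with hδdef
  have hδpos : 0 < δ := lt_min one_pos (by positivity)
  have hδ1 : δ ≤ 1 := min_le_left _ _
  have hδ2 : δ ≤ τ * ε / (‖wh‖ ^ 2 + 1) := min_le_right _ _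
  have hδ3 : δ * (‖wh‖ ^ 2 + 1) ≤ τ * ε := by
    rw [div_eq_mul_inv] at hδ2
    calc δ * (‖wh‖ ^ 2 + 1) ≤ (τ * ε * (‖wh‖ ^ 2 + 1)⁻¹) * (‖wh‖ ^ 2 + 1) := by
          exact mul_le_mul_of_nonneg_right hδ2 (le_of_lt hpos)
      _ = τ * ε := by field_simp
  set s : ℝ := 1 - δ with hsdef
  have hs0 : 0 ≤ s := by dsimp [s]; linarith
  have hs1 : s ≤ 1 := by dsimp [s]; linarith
  have hmem' : s • wh ∈ W := W.smul_mem s hmem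
  clear_value δ s
  have h1 := hmin (s • wh) hmem'
  rw [inner_smul_right, norm_smul, Real.norm_eq_abs, abs_of_nonneg hs0] at h1
  have hconv := hG.2 (Set.mem_univ v) (Set.mem_univ (v + wh))
    (by linarith : (0:ℝ) ≤ 1 - s) hs0 (by ring)
  have heq : (1 - s) • v + s • (v + wh) = v + s • wh := by
    rw [smul_add, sub_smul, one_smul]; abel
  rw [heq, smul_eq_mul, smul_eq_mul] at hconv
  have h2 : ⟪F' v, wh⟫ + 1 / (2 * τ) * ‖wh‖ ^ 2 + G (v + wh) ≤
      s * ⟪F' v, wh⟫ + 1 / (2 * τ) * (s * ‖wh‖) ^ 2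
        + ((1 - s) * G v + s * G (v + wh)) := by linarith
  -- key ring identity and division by δ
  have hX : δ * (⟪F' v, wh⟫ + G (v + wh) - G v + 1 / τ * ‖wh‖ ^ 2
      - δ * ‖wh‖ ^ 2 * (1 / (2 * τ))) ≤ δ * 0 := by
    calc δ * (⟪F' v, wh⟫ + G (v + wh) - G v + 1 / τ * ‖wh‖ ^ 2
          - δ * ‖wh‖ ^ 2 * (1 / (2 * τ)))
        = (⟪F' v, wh⟫ + 1 / (2 * τ) * ‖wh‖ ^ 2 + G (v + wh))
          - (s * ⟪F' v, wh⟫ + 1 / (2 * τ) * (s * ‖wh‖) ^ 2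
            + ((1 - s) * G v + s * G (v + wh))) := by
          rw [hsdef]; field_simp; ring
      _ ≤ δ * 0 := by linarith
  have hX' : ⟪F' v, wh⟫ + G (v + wh) - G v + 1 / τ * ‖wh‖ ^ 2
      - δ * ‖wh‖ ^ 2 * (1 / (2 * τ)) ≤ 0 := (mul_le_mul_iff_right₀ hδpos).mp hX
  have hb : δ * ‖wh‖ ^ 2 * (1 / (2 * τ)) ≤ ε / 2 := by
    have h4 : δ * ‖wh‖ ^ 2 ≤ τ * ε := by nlinarith
    have h5 : (0:ℝ) ≤ 1 / (2 * τ) := by positivity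
    calc δ * ‖wh‖ ^ 2 * (1 / (2 * τ)) ≤ τ * ε * (1 / (2 * τ)) :=
          mul_le_mul_of_nonneg_right h4 h5
      _ = ε / 2 := by field_simp
  linarith
end

section
/- (Key one-step estimate for strongly convex problems) Let μ > 0, μ_F ≥ 0 with μ_F ≤ μ, C > 0, and let ζ, R ≥ 0 satisfy ζ ≥ (μ/2) R² (strong convexity relation E(v) - E(u) ≥ (μ/2)‖v-u‖²). Define Ψ ≤ min over t ∈ [0,1] of [ -tζ + ((C + μ - μ_F)/2 t² - (μ/2) t) R² ]. Then Ψ ≤ - min{1, μ/(C + μ - μ_F)} · ζ. -/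
theorem one_step_strongly_convex (μ μF C ζ R Ψ : ℝ)
    (hμ : 0 < μ) (hμF : 0 ≤ μF) (hμFμ : μF ≤ μ) (hC : 0 < C)
    (hζ : 0 ≤ ζ) (hR : 0 ≤ R) (hζR : μ / 2 * R ^ 2 ≤ ζ)
    (hΨ : ∀ t ∈ Set.Icc (0 : ℝ) 1,
      Ψ ≤ -t * ζ + ((C + μ - μF) / 2 * t ^ 2 - μ / 2 * t) * R ^ 2) :
    Ψ ≤ -(min 1 (μ / (C + μ - μF))) * ζ := by
  have hD : 0 < C + μ - μF := by linarith
  by_cases h : μ / (C + μ - μF) ≤ 1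
  · have ht0 : 0 ≤ μ / (C + μ - μF) := by positivity
    have := hΨ (μ / (C + μ - μF)) ⟨ht0, h⟩
    rw [min_eq_right h]
    have hkey : (C + μ - μF) / 2 * (μ / (C + μ - μF)) ^ 2 - μ / 2 * (μ / (C + μ - μF)) = 0 := by
      field_simp
      ring
    rw [hkey, zero_mul, add_zero] at this
    exact this
  · push_neg at h
    have := hΨ 1 ⟨zero_le_one, le_refl 1⟩
    rw [min_eq_left h.le]
    have hCμF : C < μF := by
      have := (one_lt_div hD).mp h
      linarith
    nlinarith [sq_nonneg R]
end

section
/- (Expected one-step descent equals parallel-method descent, linear case) Let V be a finite-dimensional real inner product space, A : V → V symmetric positive definite, f ∈ V, F(v) = (1/2)⟪Av, v⟫ - ⟪f, v⟫, and V = Σ_{j=1}^J V_j a decomposition into subspaces with exact local solvers ŵ_j(v) = argmin over w_j ∈ V_j of F(v + w_j). Then for any v ∈ V: (1/J) Σ_{j=1}^J F(v + ŵ_j(v)) ≤ F(v) + (1/J)[ min over w = Σ_j w_j (w_j ∈ V_j) of ( ⟪Av - f, w⟫ + Σ_j (1/2)⟪A w_j, w_j⟫ ) ]. -/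
open RealInnerProductSpace Finset

theorem expected_descent_linear_case {V : Type*} [NormedAddCommGroup V]
    [InnerProductSpace ℝ V] [FiniteDimensional ℝ V]
    (A : V →L[ℝ] V) (hsym : ∀ x y : V, ⟪A x, y⟫ = ⟪x, A y⟫)
    (hpos : ∀ x : V, x ≠ 0 → 0 < ⟪A x, x⟫)
    (f : V) (F : V → ℝ) (hF : ∀ v, F v = 1 / 2 * ⟪A v, v⟫ - ⟪f, v⟫)
    (J : ℕ) (hJ : 0 < J) (Vs : Fin J → Submodule ℝ V)
    (hspan : (⨆ j, Vs j) = ⊤)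
    (v : V) (wh : Fin J → V) (hmem : ∀ j, wh j ∈ Vs j)
    (hmin : ∀ j, ∀ w ∈ Vs j, F (v + wh j) ≤ F (v + w)) :
    (1 / (J : ℝ)) * ∑ j, F (v + wh j) ≤
      F v + (1 / (J : ℝ)) * sInf {r : ℝ | ∃ ws : Fin J → V,
        (∀ j, ws j ∈ Vs j) ∧
        r = ⟪A v - f, ∑ j, ws j⟫ + ∑ j, 1 / 2 * ⟪A (ws j), ws j⟫} := by
  set S : Set ℝ := {r : ℝ | ∃ ws : Fin J → V,
        (∀ j, ws j ∈ Vs j) ∧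
        r = ⟪A v - f, ∑ j, ws j⟫ + ∑ j, 1 / 2 * ⟪A (ws j), ws j⟫} with hS
  have key : ∀ w : V, F (v + w) = F v + (⟪A v - f, w⟫ + 1 / 2 * ⟪A w, w⟫) := by
    intro w
    have hsymm : ⟪A w, v⟫ = ⟪A v, w⟫ := by rw [hsym, real_inner_comm]
    rw [hF, hF]
    simp only [map_add, inner_add_left, inner_add_right, inner_sub_left]
    rw [hsymm]; ring
  have g : Fin J → ℝ := fun j => ⟪A v - f, wh j⟫ + 1 / 2 * ⟪A (wh j), wh j⟫
  have hsum : ∑ j, F (v + wh j) =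
      (J : ℝ) * F v + (⟪A v - f, ∑ j, wh j⟫ + ∑ j, 1 / 2 * ⟪A (wh j), wh j⟫) := by
    simp only [key, Finset.sum_add_distrib, inner_sum]
    simp [mul_comm]
  have hne : S.Nonempty := by
    refine ⟨0, fun j => 0, fun j => (Vs j).zero_mem, ?_⟩
    simp
  have hlb : ⟪A v - f, ∑ j, wh j⟫ + ∑ j, 1 / 2 * ⟪A (wh j), wh j⟫ ≤ sInf S := by
    apply le_csInf hne
    rintro r ⟨ws, hws, rfl⟩
    have hterm : ∀ j, ⟪A v - f, wh j⟫ + 1 / 2 * ⟪A (wh j), wh j⟫ ≤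
        ⟪A v - f, ws j⟫ + 1 / 2 * ⟪A (ws j), ws j⟫ := by
      intro j
      have := hmin j (ws j) (hws j)
      rw [key, key] at this
      rw [one_div] at this; linarith
    calc ⟪A v - f, ∑ j, wh j⟫ + ∑ j, 1 / 2 * ⟪A (wh j), wh j⟫
        = ∑ j, (⟪A v - f, wh j⟫ + 1 / 2 * ⟪A (wh j), wh j⟫) := by
          rw [inner_sum, Finset.sum_add_distrib]
      _ ≤ ∑ j, (⟪A v - f, ws j⟫ + 1 / 2 * ⟪A (ws j), ws j⟫) :=
          Finset.sum_le_sum fun j _ => hterm j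
      _ = ⟪A v - f, ∑ j, ws j⟫ + ∑ j, 1 / 2 * ⟪A (ws j), ws j⟫ := by
          rw [inner_sum, Finset.sum_add_distrib]
  have hJpos : (0 : ℝ) < (J : ℝ) := by exact_mod_cast hJ
  rw [hsum, mul_add, one_div, inv_mul_cancel_left₀ (ne_of_gt hJpos)]
  have := mul_le_mul_of_nonneg_left hlb (le_of_lt (by positivity : (0:ℝ) < 1 / J))
  rw [one_div] at this; linarith
end

section
/- (Generalized additive Schwarz identity, quadratic exact case) Let V be a finite-dimensional real inner product space, A symmetric positive definite, and V = Σ_{j=1}^J V_j with subspaces V_j. Fix g ∈ V and for each j let ŵ_j ∈ V_j minimize w_j ↦ ⟪g, w_j⟫ + (1/2)⟪A w_j, w_j⟫ over V_j. Then ŵ := Σ_j ŵ_j minimizes w ↦ ⟪g, w⟫ + inf{ Σ_j (1/2)⟪A w_j, w_j⟫ : w = Σ_j w_j, w_j ∈ V_j } over V, and inf{ Σ_j (1/2)⟪A w_j, w_j⟫ : ŵ = Σ_j w_j } = Σ_j (1/2)⟪A ŵ_j, ŵ_j⟫. -/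
open RealInnerProductSpace Finset

theorem additive_schwarz_quadratic {V : Type*} [NormedAddCommGroup V]
    [InnerProductSpace ℝ V] [FiniteDimensional ℝ V]
    (A : V →L[ℝ] V) (hsym : ∀ x y : V, ⟪A x, y⟫ = ⟪x, A y⟫)
    (hpos : ∀ x : V, x ≠ 0 → 0 < ⟪A x, x⟫)
    (J : ℕ) (hJ : 0 < J) (Vs : Fin J → Submodule ℝ V)
    (hspan : (⨆ j, Vs j) = ⊤)
    (g : V) (wh : Fin J → V) (hmem : ∀ j, wh j ∈ Vs j)
    (hmin : ∀ j, ∀ w ∈ Vs j,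
      ⟪g, wh j⟫ + 1 / 2 * ⟪A (wh j), wh j⟫ ≤ ⟪g, w⟫ + 1 / 2 * ⟪A w, w⟫) :
    (∀ w : V,
      ⟪g, ∑ j, wh j⟫ + sInf {r : ℝ | ∃ ws : Fin J → V, (∀ j, ws j ∈ Vs j) ∧
          (∑ j, ws j) = ∑ j, wh j ∧ r = ∑ j, 1 / 2 * ⟪A (ws j), ws j⟫} ≤
      ⟪g, w⟫ + sInf {r : ℝ | ∃ ws : Fin J → V, (∀ j, ws j ∈ Vs j) ∧
          (∑ j, ws j) = w ∧ r = ∑ j, 1 / 2 * ⟪A (ws j), ws j⟫}) ∧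
    sInf {r : ℝ | ∃ ws : Fin J → V, (∀ j, ws j ∈ Vs j) ∧
        (∑ j, ws j) = ∑ j, wh j ∧ r = ∑ j, 1 / 2 * ⟪A (ws j), ws j⟫} =
      ∑ j, 1 / 2 * ⟪A (wh j), wh j⟫ := by
  classical
  set S : V → Set ℝ := fun w => {r : ℝ | ∃ ws : Fin J → V, (∀ j, ws j ∈ Vs j) ∧
      (∑ j, ws j) = w ∧ r = ∑ j, 1 / 2 * ⟪A (ws j), ws j⟫} with hS
  -- key inequality
  have key : ∀ w : V, ∀ r ∈ S w,
      ⟪g, ∑ j, wh j⟫ + ∑ j, 1 / 2 * ⟪A (wh j), wh j⟫ ≤ ⟪g, w⟫ + r := by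
    rintro w r ⟨ws, hws, rfl, rfl⟩
    rw [inner_sum, inner_sum, ← Finset.sum_add_distrib, ← Finset.sum_add_distrib]
    exact Finset.sum_le_sum fun j _ => hmin j (ws j) (hws j)
  have hmemS : ∀ w : V, (∑ j, 1 / 2 * ⟪A (wh j), wh j⟫) ∈ S w → True := fun _ _ => trivial
  have hwhS : (∑ j, 1 / 2 * ⟪A (wh j), wh j⟫) ∈ S (∑ j, wh j) :=
    ⟨wh, hmem, rfl, rfl⟩
  have hleast : IsLeast (S (∑ j, wh j)) (∑ j, 1 / 2 * ⟪A (wh j), wh j⟫) := by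
    refine ⟨hwhS, fun r hr => ?_⟩
    have := key (∑ j, wh j) r hr
    linarith
  have hInf := hleast.csInf_eq
  refine ⟨fun w => ?_, hInf⟩
  rw [hInf]
  -- nonemptiness of S w
  have hne : (S w).Nonempty := by
    have hw : w ∈ ⨆ j, Vs j := hspan ▸ Submodule.mem_top
    obtain ⟨f, hf, hsum⟩ := (Submodule.mem_iSup_iff_exists_finsupp Vs w).mp hw
    refine ⟨∑ j, 1 / 2 * ⟪A (f j), f j⟫, f, hf, ?_, rfl⟩
    rw [← hsum, Finsupp.sum_fintype]
    simp
  have hlb : ⟪g, ∑ j, wh j⟫ + ∑ j, 1 / 2 * ⟪A (wh j), wh j⟫ - ⟪g, w⟫ ≤ sInf (S w) :=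
    le_csInf hne fun r hr => by linarith [key w r hr]
  linarith
end
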